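/- Let the sequences {(x_k, y_k, z_k)}, {(x*_k, Δy*_k, z*_k)}, {ρ_k}, {σ_k}, {η_k}, {ω_k} be generated by the stabilized LCL algorithm with tolerances ω_* = 0 and η_* = 0. Suppose the iterates {x*_k} (together with {x_k}) lie in a compact set, and that Ĵ(x*) has full row rank at every limit point x* of {x*_k}. Suppose (GNP) is infeasible in the sense that there exists δ > 0 with ‖c(x)‖ > δ for all x ≥ 0. Let x* be any limit point of {x*_k}, with 𝒦 the index set of a subsequence converging to x*. Then J(x*_k)ᵀc(x*_k) converges, as k ∈ 𝒦 tends to infinity, to z* := J(x*)ᵀc(x*), and (x*, z*) is a first-order KKT point for the problem: minimize (1/2)‖c(x)‖² subject to x ≥ 0; that is, J(x*)ᵀc(x*) = z* and min(x*, z*) = 0 componentwise. -/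

import Mathlib

open scoped RealInnerProductSpace
open Filter Topology

noncomputable section

attribute [local instance] Classical.propDecidable

/-- Euclidean space ℝ^n. -/
abbrev Evec (n : ℕ) := EuclideanSpace ℝ (Fin n)

/-- Componentwise minimum of two vectors. -/
def vmin {n : ℕ} (x z : Evec n) : Evec n := WithLp.toLp 2 (fun i => min (x i) (z i))

/-- The ∞-norm of a vector. -/
def normInf {n : ℕ} (x : Evec n) : ℝ := ⨆ i, |x i|

/-- Transpose (adjoint) of a linear map between Euclidean spaces. -/
def Jt {n m : ℕ} (A : Evec n →L[ℝ] Evec m) : Evec m →L[ℝ] Evec n :=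
  ContinuousLinearMap.adjoint A

/-- Restriction of a vector `v` to the set of indices `i` with `xs i > 0`
(the inactive bounds at `xs`). -/
def hatVec {n : ℕ} (xs : Evec n) (v : Evec n) : EuclideanSpace ℝ {i : Fin n // 0 < xs i} :=
  WithLp.toLp 2 (fun (i : {i : Fin n // 0 < xs i}) => v i.1)

/-- "Ĵ has full row rank": the restriction of the transpose of `A` to the
inactive indices of `xs` is injective. -/
def FullRank {n m : ℕ} (A : Evec n →L[ℝ] Evec m) (xs : Evec n) : Prop :=
  Function.Injective (fun y : Evec m => hatVec xs (Jt A y))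

/-- First-order KKT point for (GNP). -/
def isKKT {n m : ℕ} (c : Evec n → Evec m) (g : Evec n → Evec n)
    (J : Evec n → (Evec n →L[ℝ] Evec m)) (x : Evec n) (y : Evec m) (z : Evec n) : Prop :=
  c x = 0 ∧ g x - Jt (J x) y = z ∧ vmin x z = 0

/-- The stabilized LCL algorithm: problem data, parameters, and the sequences
of iterates it generates, together with the rules that govern them. -/
structure LCL (n m : ℕ) where
  /-- objective function -/
  f : Evec n → ℝ
  /-- nonlinear constraint functions -/
  c : Evec n → Evec m
  /-- gradient of `f` -/
  g : Evec n → Evec n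
  /-- Jacobian of `c` -/
  J : Evec n → (Evec n →L[ℝ] Evec m)
  /-- open set containing the nonnegative orthant on which `f, c` are C² -/
  U : Set (Evec n)
  hUopen : IsOpen U
  hUorth : {x : Evec n | ∀ i, 0 ≤ x i} ⊆ U
  hf : ContDiffOn ℝ 2 f U
  hc : ContDiffOn ℝ 2 c U
  hg : ∀ x ∈ U, HasGradientAt f (g x) x
  hJ : ∀ x ∈ U, HasFDerivAt c (J x) x
  -- fixed parameters
  tauρ : ℝ
  tauσ : ℝ
  alf : ℝ
  bet : ℝ
  σlo : ℝ
  σhi : ℝ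
  ωstar : ℝ
  ηstar : ℝ
  htauρ : 1 < tauρ
  htauσ : 1 < tauσ
  half0 : 0 < alf
  half1 : alf < 1
  hbet : 0 < bet
  hσlo : 0 < σlo
  hσlohi : σlo ≤ σhi
  hωstar : 0 ≤ ωstar
  hηstar : 0 ≤ ηstar
  -- the sequences of iterates
  x : ℕ → Evec n
  y : ℕ → Evec m
  z : ℕ → Evec n
  /-- subproblem solutions x*_k -/
  xs : ℕ → Evec n
  /-- subproblem multipliers Δy*_k -/
  dys : ℕ → Evec m
  /-- subproblem reduced costs z*_k -/
  zs : ℕ → Evec n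
  ρ : ℕ → ℝ
  σ : ℕ → ℝ
  η : ℕ → ℝ
  ω : ℕ → ℝ
  hρ0 : 1 < ρ 0
  hσ0 : 0 < σ 0
  hη0 : 0 < η 0
  -- choice of subproblem tolerances: ω_k ≥ ω_* and ω_k → ω_*
  hω_lb : ∀ k, ωstar ≤ ω k
  hω_to : Filter.Tendsto ω Filter.atTop (nhds ωstar)
  -- the inexact elastic subproblem conditions (59)
  sub_nonneg : ∀ k, ∀ i, 0 ≤ xs k i
  sub_lin : ∀ k, ∃ v w : Evec m, (∀ i, 0 ≤ v i) ∧ (∀ i, 0 ≤ w i) ∧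
    c (x k) + J (x k) (xs k - x k) + v - w = 0
  sub_grad : ∀ k,
    g (xs k) - Jt (J (xs k)) (y k - ρ k • c (xs k)) - Jt (J (x k)) (dys k) = zs k
  sub_opt : ∀ k, normInf (vmin (xs k) (zs k)) ≤ ω k
  sub_dy : ∀ k, normInf (dys k) ≤ σ k + ω k
  -- successful iteration updates
  upd_succ : ∀ k, ‖c (xs k)‖ ≤ max ηstar (η k) →
    x (k+1) = xs k ∧
    y (k+1) = y k + dys k - ρ k • c (xs k) ∧
    z (k+1) = zs k ∧
    ρ (k+1) = ρ k ∧
    σ (k+1) = max σlo (min (normInf (dys k)) σhi) ∧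
    η (k+1) = η k / ρ (k+1) ^ bet
  -- unsuccessful iteration updates
  upd_fail : ∀ k, ¬ ‖c (xs k)‖ ≤ max ηstar (η k) →
    x (k+1) = x k ∧
    y (k+1) = y k ∧
    z (k+1) = z k ∧
    ρ (k+1) = tauρ * ρ k ∧
    σ (k+1) = σ k / tauσ ∧
    η (k+1) = η 0 / ρ (k+1) ^ alf

/-- The updated multiplier estimate ŷ_k = y*_k − ρ_k c(x*_k). -/
def LCL.yhat {n m : ℕ} (A : LCL n m) (k : ℕ) : Evec m :=
  A.y k + A.dys k - A.ρ k • A.c (A.xs k)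

/-!
Under infeasibility a successful iteration needs `η_k > δ`. A run of successes freezes `ρ` and
makes `η` decay geometrically, so failures occur infinitely often and `ρ_k → ∞`; once `ρ` is
large, a failure resets `η` below `δ` and from then on every iteration fails. Thereafter `x_k, y_k`
are frozen and `σ_k → 0`, so `Δy*_k → 0`, and dividing the subproblem's gradient equation by `ρ_k`
shows `z*_k / ρ_k → J(x*)ᵀc(x*)` along `𝒦`. As `ρ_k ≥ 1` and `x*_k ≥ 0`, the scaling by `1/ρ_k`
does not increase `|min(x*_k, z*_k)| ≤ ω_k → 0`, whence `min(x*, J(x*)ᵀc(x*)) = 0`.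
-/

lemma abs_apply_le_normInf {n : ℕ} (v : Evec n) (i : Fin n) : |v i| ≤ normInf v :=
  le_ciSup (f := fun j => |v j|) (Set.finite_range _).bddAbove i

lemma tendsto_evec_iff {α : Type*} {l : Filter α} {n : ℕ} {f : α → Evec n} {a : Evec n} :
    Tendsto f l (𝓝 a) ↔ ∀ i, Tendsto (fun k => f k i) l (𝓝 (a i)) := by
  rw [(PiLp.continuousLinearEquiv 2 ℝ (fun _ : Fin n => ℝ)).toHomeomorph.isInducing.tendsto_nhds_iff]
  exact tendsto_pi_nhds

lemma abs_min_mul_le_abs_min {a b t : ℝ} (ha : 0 ≤ a) (ht₀ : 0 ≤ t) (ht₁ : t ≤ 1) :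
    |min a (t * b)| ≤ |min a b| := by
  rcases le_total 0 b with hb | hb
  · have htb : t * b ≤ b := mul_le_of_le_one_left hb ht₁
    rw [abs_of_nonneg (le_min ha (mul_nonneg ht₀ hb)), abs_of_nonneg (le_min ha hb)]
    exact min_le_min_left a htb
  · have htb : b ≤ t * b := le_mul_of_le_one_left hb ht₁
    rw [min_eq_right (hb.trans ha), min_eq_right ((mul_nonpos_of_nonneg_of_nonpos ht₀ hb).trans ha),
      abs_of_nonpos hb, abs_of_nonpos (mul_nonpos_of_nonneg_of_nonpos ht₀ hb)]
    linarith

lemma vmin_eq_zero_of_tendsto {α : Type*} {l : Filter α} [l.NeBot] {n : ℕ} {u v : α → Evec n}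
    {a b : Evec n} {ε : α → ℝ} (hu : Tendsto u l (𝓝 a)) (hv : Tendsto v l (𝓝 b))
    (hε : Tendsto ε l (𝓝 0)) (hle : ∀ᶠ k in l, ∀ i, |min (u k i) (v k i)| ≤ ε k) :
    vmin a b = 0 := by
  ext i
  have hmin : Tendsto (fun k => min (u k i) (v k i)) l (𝓝 (min (a i) (b i))) :=
    (tendsto_evec_iff.1 hu i).min (tendsto_evec_iff.1 hv i)
  have hzero : Tendsto (fun k => min (u k i) (v k i)) l (𝓝 0) :=
    squeeze_zero_norm' (hle.mono fun k hk => hk i) hε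
  exact tendsto_nhds_unique hmin hzero

lemma eq_of_forall_ge_succ_eq {α : Type*} {u : ℕ → α} {N : ℕ} (h : ∀ k ≥ N, u (k + 1) = u k) :
    ∀ k ≥ N, u k = u N := by
  intro k hk
  induction k, hk using Nat.le_induction with
  | base => rfl
  | succ k hk ih => rw [h k hk, ih]

lemma tendsto_zero_of_forall_ge_succ_eq_mul {u : ℕ → ℝ} {r : ℝ} {N : ℕ} (hr₀ : 0 ≤ r) (hr₁ : r < 1)
    (h : ∀ k ≥ N, u (k + 1) = r * u k) : Tendsto u atTop (𝓝 0) := by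
  have hgeom : ∀ t, u (t + N) = r ^ t * u N := fun t => by
    induction t with
    | zero => simp
    | succ t ih => rw [Nat.add_right_comm, h _ (Nat.le_add_left N t), ih, pow_succ']; ring
  rw [← tendsto_add_atTop_iff_nat N, funext hgeom, ← zero_mul (u N)]
  exact (tendsto_pow_atTop_nhds_zero_of_lt_one hr₀ hr₁).mul_const _

namespace LCL

variable {n m : ℕ} (A : LCL n m)

def IsSuccessful (k : ℕ) : Prop := ‖A.c (A.xs k)‖ ≤ max A.ηstar (A.η k)

lemma one_lt_rho (k : ℕ) : 1 < A.ρ k := by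
  induction k with
  | zero => exact A.hρ0
  | succ k ih =>
    by_cases hk : A.IsSuccessful k
    · rw [(A.upd_succ k hk).2.2.2.1]; exact ih
    · rw [(A.upd_fail k hk).2.2.2.1]; nlinarith [A.htauρ]

lemma rho_pos (k : ℕ) : 0 < A.ρ k := zero_lt_one.trans (A.one_lt_rho k)

lemma rho_monotone : Monotone A.ρ := by
  refine monotone_nat_of_le_succ fun k => ?_
  by_cases hk : A.IsSuccessful k
  · rw [(A.upd_succ k hk).2.2.2.1]
  · rw [(A.upd_fail k hk).2.2.2.1]; nlinarith [A.htauρ, A.one_lt_rho k]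

lemma eta_pos (k : ℕ) : 0 < A.η k := by
  induction k with
  | zero => exact A.hη0
  | succ k ih =>
    have hρ := A.rho_pos (k + 1)
    by_cases hk : A.IsSuccessful k
    · rw [(A.upd_succ k hk).2.2.2.2.2]; exact div_pos ih (Real.rpow_pos_of_pos hρ _)
    · rw [(A.upd_fail k hk).2.2.2.2.2]; exact div_pos A.hη0 (Real.rpow_pos_of_pos hρ _)

lemma tendsto_rho_atTop (h : ∃ᶠ k in atTop, ¬ A.IsSuccessful k) : Tendsto A.ρ atTop atTop := by
  refine (tendsto_atTop_of_monotone A.rho_monotone).resolve_right fun ⟨L, hL⟩ => ?_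
  have hgap : Tendsto (fun k => A.ρ (k + 1) - A.tauρ * A.ρ k) atTop (𝓝 (L - A.tauρ * L)) :=
    ((tendsto_add_atTop_iff_nat 1).2 hL).sub (hL.const_mul _)
  have hzero : L - A.tauρ * L ∈ ({0} : Set ℝ) :=
    isClosed_singleton.mem_of_frequently_of_tendsto
      (h.mono fun k hk => by simp [(A.upd_fail k hk).2.2.2.1]) hgap
  have hL : 1 ≤ L := ge_of_tendsto' hL fun k => (A.one_lt_rho k).le
  rw [Set.mem_singleton_iff] at hzero
  nlinarith [A.htauρ]

lemma abs_min_inv_rho_smul_zs_le (k : ℕ) (i : Fin n) :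
    |min (A.xs k i) (((A.ρ k)⁻¹ • A.zs k) i)| ≤ A.ω k :=
  calc |min (A.xs k i) (((A.ρ k)⁻¹ • A.zs k) i)| ≤ |min (A.xs k i) (A.zs k i)| :=
        abs_min_mul_le_abs_min (A.sub_nonneg k i) (inv_nonneg.2 (A.rho_pos k).le)
          (inv_le_one_of_one_le₀ (A.one_lt_rho k).le)
    _ = |vmin (A.xs k) (A.zs k) i| := rfl
    _ ≤ A.ω k := (abs_apply_le_normInf _ i).trans (A.sub_opt k)

lemma continuousOn_J : ContinuousOn A.J A.U :=
  (A.hc.continuousOn_fderiv_of_isOpen A.hUopen (by norm_num)).congr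
    fun x hx => (A.hJ x hx).fderiv.symm

lemma continuousOn_Jt : ContinuousOn (fun x => Jt (A.J x)) A.U :=
  (ContinuousLinearMap.adjoint (𝕜 := ℝ) (E := Evec n) (F := Evec m)).continuous.comp_continuousOn
    A.continuousOn_J

lemma continuousOn_g : ContinuousOn A.g A.U := by
  refine ((InnerProductSpace.toDual ℝ (Evec n)).symm.continuous.comp_continuousOn
    (A.hf.continuousOn_fderiv_of_isOpen A.hUopen (by norm_num))).congr fun x hx => ?_
  simp [(A.hg x hx).hasFDerivAt.fderiv]

lemma continuousAt_Jt_apply_c {x : Evec n} (hx : x ∈ A.U) :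
    ContinuousAt (fun x => Jt (A.J x) (A.c x)) x :=
  (A.continuousOn_Jt.clm_apply A.hc.continuousOn).continuousAt (A.hUopen.mem_nhds hx)

lemma zs_eq (k : ℕ) : A.zs k = A.g (A.xs k) - Jt (A.J (A.xs k)) (A.y k)
    - Jt (A.J (A.x k)) (A.dys k) + A.ρ k • Jt (A.J (A.xs k)) (A.c (A.xs k)) := by
  rw [← A.sub_grad k, map_sub, map_smul]
  abel

section Infeasible

variable {A} {δ : ℝ} (hes : A.ηstar = 0) (hδc : ∀ x : Evec n, (∀ i, 0 ≤ x i) → δ < ‖A.c x‖)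
include hes hδc

lemma lt_eta_of_isSuccessful {k : ℕ} (hk : A.IsSuccessful k) : δ < A.η k := by
  have h := (hδc _ (A.sub_nonneg k)).trans_le hk
  rwa [hes, max_eq_right (A.eta_pos k).le] at h

lemma frequently_not_isSuccessful (hδ : 0 < δ) : ∃ᶠ k in atTop, ¬ A.IsSuccessful k := by
  intro hsucc
  simp only [not_not] at hsucc
  obtain ⟨N, hN⟩ := eventually_atTop.1 hsucc
  have hρ : ∀ k ≥ N, A.ρ k = A.ρ N :=
    eq_of_forall_ge_succ_eq fun k hk => (A.upd_succ k (hN k hk)).2.2.2.1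
  have hr : 1 < A.ρ N ^ A.bet := Real.one_lt_rpow (A.one_lt_rho N) A.hbet
  have hη : Tendsto A.η atTop (𝓝 0) := by
    refine tendsto_zero_of_forall_ge_succ_eq_mul (N := N) (inv_nonneg.2 (by positivity))
      (inv_lt_one_of_one_lt₀ hr) fun k hk => ?_
    rw [(A.upd_succ k (hN k hk)).2.2.2.2.2, hρ (k + 1) (by omega), div_eq_inv_mul]
  obtain ⟨k, hsmall, hk⟩ := ((hη.eventually (gt_mem_nhds hδ)).and hsucc).exists
  exact hsmall.not_gt (lt_eta_of_isSuccessful hes hδc hk)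

lemma eventually_not_isSuccessful (hδ : 0 < δ) : ∀ᶠ k in atTop, ¬ A.IsSuccessful k := by
  have hfreq := frequently_not_isSuccessful hes hδc hδ
  have hreset : Tendsto (fun k => A.η 0 / A.ρ k ^ A.alf) atTop (𝓝 0) :=
    tendsto_const_nhds.div_atTop ((tendsto_rpow_atTop A.half0).comp (A.tendsto_rho_atTop hfreq))
  obtain ⟨M, hM⟩ := eventually_atTop.1 (hreset.eventually (gt_mem_nhds hδ))
  obtain ⟨j, hjM, hj⟩ := frequently_atTop.1 hfreq M
  have hsmall : ∀ k ≥ j + 1, A.η k < δ := by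
    intro k hk
    induction k, hk using Nat.le_induction with
    | base => rw [(A.upd_fail j hj).2.2.2.2.2]; exact hM _ (by omega)
    | succ k hk ih =>
      have hk_fail : ¬ A.IsSuccessful k := fun hs => ih.not_gt (lt_eta_of_isSuccessful hes hδc hs)
      rw [(A.upd_fail k hk_fail).2.2.2.2.2]; exact hM _ (by omega)
  exact eventually_atTop.2
    ⟨j + 1, fun k hk hs => (hsmall k hk).not_gt (lt_eta_of_isSuccessful hes hδc hs)⟩

end Infeasible

section EventuallyUnsuccessful

variable {A} (hfail : ∀ᶠ k in atTop, ¬ A.IsSuccessful k)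
include hfail

lemma tendsto_sigma_zero : Tendsto A.σ atTop (𝓝 0) := by
  obtain ⟨N, hN⟩ := eventually_atTop.1 hfail
  refine tendsto_zero_of_forall_ge_succ_eq_mul (N := N) (inv_nonneg.2 (by linarith [A.htauσ]))
    (inv_lt_one_of_one_lt₀ A.htauσ) fun k hk => ?_
  rw [(A.upd_fail k (hN k hk)).2.2.2.2.1, div_eq_inv_mul]

lemma tendsto_dys_zero (hws : A.ωstar = 0) : Tendsto A.dys atTop (𝓝 0) := by
  have hbound : Tendsto (fun k => A.σ k + A.ω k) atTop (𝓝 0) := by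
    simpa [hws] using (tendsto_sigma_zero hfail).add A.hω_to
  refine tendsto_evec_iff.2 fun i => squeeze_zero_norm (fun k => ?_) hbound
  exact (abs_apply_le_normInf (A.dys k) i).trans (A.sub_dy k)

lemma tendsto_inv_rho_smul_zs (hws : A.ωstar = 0) {l : Filter ℕ} (hl : l ≤ atTop) {xstar : Evec n}
    (hx : xstar ∈ A.U) (hconv : Tendsto A.xs l (𝓝 xstar)) :
    Tendsto (fun k => (A.ρ k)⁻¹ • A.zs k) l (𝓝 (Jt (A.J xstar) (A.c xstar))) := by
  obtain ⟨N, hN⟩ := eventually_atTop.1 hfail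
  have hx_eq := eq_of_forall_ge_succ_eq fun k hk => (A.upd_fail k (hN k hk)).1
  have hy_eq := eq_of_forall_ge_succ_eq fun k hk => (A.upd_fail k (hN k hk)).2.1
  have hcont : ContinuousAt (fun x => A.g x - Jt (A.J x) (A.y N)) xstar :=
    (A.continuousOn_g.sub (A.continuousOn_Jt.clm_apply continuousOn_const)).continuousAt
      (A.hUopen.mem_nhds hx)
  have hdys : Tendsto (fun k => Jt (A.J (A.x N)) (A.dys k)) l (𝓝 0) :=
    ((Jt _).continuous.tendsto' 0 0 (map_zero _)).comp ((tendsto_dys_zero hfail hws).mono_left hl)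
  have hρinv : Tendsto (fun k => (A.ρ k)⁻¹) l (𝓝 0) :=
    (A.tendsto_rho_atTop hfail.frequently).inv_tendsto_atTop.mono_left hl
  have hlim := (hρinv.smul ((hcont.tendsto.comp hconv).sub hdys)).add
    ((A.continuousAt_Jt_apply_c hx).tendsto.comp hconv)
  rw [zero_smul, zero_add] at hlim
  refine hlim.congr' (Eventually.mono (hl (eventually_ge_atTop N)) fun k hk => ?_)
  simp only [Function.comp_apply]
  rw [A.zs_eq k, hx_eq k hk, hy_eq k hk, smul_add, smul_smul,
    inv_mul_cancel₀ (A.rho_pos k).ne', one_smul]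

end EventuallyUnsuccessful

end LCL

theorem stmt12_general {n m : ℕ} (A : LCL n m)
    (hws : A.ωstar = 0) (hes : A.ηstar = 0)
    -- (GNP) is infeasible
    (hinf : ∃ δ > 0, ∀ x : Evec n, (∀ i, 0 ≤ x i) → δ < ‖A.c x‖)
    -- x* is a limit point of {x*_k}, along the subsequence indexed by 𝒦
    (xstar : Evec n) (K : Set ℕ) (hK : K.Infinite)
    (hconv : Tendsto A.xs (atTop ⊓ 𝓟 K) (𝓝 xstar)) :
    Tendsto (fun k => Jt (A.J (A.xs k)) (A.c (A.xs k))) (atTop ⊓ 𝓟 K)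
      (𝓝 (Jt (A.J xstar) (A.c xstar))) ∧
    vmin xstar (Jt (A.J xstar) (A.c xstar)) = 0 := by
  obtain ⟨δ, hδ, hδc⟩ := hinf
  have hfail := LCL.eventually_not_isSuccessful hes hδc hδ
  have : (atTop ⊓ 𝓟 K).NeBot := by
    rwa [← Nat.cofinite_eq_atTop, cofinite_inf_principal_neBot_iff]
  have hx : xstar ∈ A.U := A.hUorth fun i =>
    ge_of_tendsto' (tendsto_evec_iff.1 hconv i) fun k => A.sub_nonneg k i
  refine ⟨(A.continuousAt_Jt_apply_c hx).tendsto.comp hconv, ?_⟩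
  exact vmin_eq_zero_of_tendsto hconv (LCL.tendsto_inv_rho_smul_zs hfail hws inf_le_left hx hconv)
    ((hws ▸ A.hω_to).mono_left inf_le_left) (Eventually.of_forall A.abs_min_inv_rho_smul_zs_le)

/-- Theorem 3: convergence on infeasible problems. -/
theorem stmt12 {n m : ℕ} (A : LCL n m)
    (hws : A.ωstar = 0) (hes : A.ηstar = 0)
    -- compactness of the iterates
    (B : Set (Evec n)) (hB : IsCompact B)
    (hxsB : ∀ k, A.xs k ∈ B) (hxB : ∀ k, A.x k ∈ B)
    -- Ĵ has full row rank at every limit point of {x*_k}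
    (hFRall : ∀ xl : Evec n, MapClusterPt xl atTop A.xs → FullRank (A.J xl) xl)
    -- (GNP) is infeasible
    (hinf : ∃ δ > 0, ∀ x : Evec n, (∀ i, 0 ≤ x i) → δ < ‖A.c x‖)
    -- x* is a limit point of {x*_k}, along the subsequence indexed by 𝒦
    (xstar : Evec n) (K : Set ℕ) (hK : K.Infinite)
    (hconv : Tendsto A.xs (atTop ⊓ 𝓟 K) (𝓝 xstar)) :
    Tendsto (fun k => Jt (A.J (A.xs k)) (A.c (A.xs k))) (atTop ⊓ 𝓟 K)
      (𝓝 (Jt (A.J xstar) (A.c xstar))) ∧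
    vmin xstar (Jt (A.J xstar) (A.c xstar)) = 0 :=
  stmt12_general A hws hes hinf xstar K hK hconv
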